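/- Marginal gain formula: for a nonempty subset Z of the index set and an index v ∉ Z with Z ∪ {v} a proper subset, the quantity e_vᵀ·(L_{\Z})⁻¹·e_v is nonzero and tr((L_{\Z})⁻¹) − tr((L_{\(Z∪{v})})⁻¹) = (e_vᵀ·((L_{\Z})⁻¹)²·e_v) / (e_vᵀ·(L_{\Z})⁻¹·e_v), where e_v is the standard basis vector corresponding to index v within the complement of Z. -/
import Mathlib

open Matrix BigOperators

private lemma pow_entry_nonneg {n : ℕ} (P : Matrix (Fin n) (Fin n) ℝ)
    (hP0 : ∀ i j, 0 ≤ P i j) : ∀ m i j, 0 ≤ (P ^ m) i j := by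
  intro m
  induction m with
  | zero =>
    intro i j
    by_cases h : i = j <;> simp [pow_zero, Matrix.one_apply, h]
  | succ m ih =>
    intro i j
    rw [pow_succ', Matrix.mul_apply]
    exact Finset.sum_nonneg fun k _ => mul_nonneg (hP0 i k) (ih k j)

private lemma grounded_kernel {n : ℕ} (P : Matrix (Fin n) (Fin n) ℝ)
    (hP0 : ∀ i j, 0 ≤ P i j) (hProw : ∀ i, ∑ j, P i j = 1)
    (hPirr : ∀ i j, ∃ m : ℕ, 1 ≤ m ∧ 0 < (P ^ m) i j)
    (X : Finset (Fin n)) (hX : X.Nonempty)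
    (x : {i : Fin n // i ∉ X} → ℝ)
    (hx : ∀ a : {i : Fin n // i ∉ X}, x a = ∑ b : {i : Fin n // i ∉ X}, P a.1 b.1 * x b) :
    x = 0 := by
  classical
  set z : Fin n → ℝ := fun i => if h : i ∉ X then |x ⟨i, h⟩| else 0 with hz
  have hz0 : ∀ i, 0 ≤ z i := by
    intro i
    by_cases h : i ∉ X
    · simp [hz, h, abs_nonneg]
    · simp [hz, not_not.mp h]
  obtain ⟨u, hu⟩ := hX
  have hne : (Finset.univ : Finset (Fin n)).Nonempty := ⟨u, Finset.mem_univ u⟩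
  obtain ⟨i0, -, hi0⟩ := Finset.exists_max_image Finset.univ z hne
  set c := z i0 with hc
  have hmax : ∀ i, z i ≤ c := fun i => hi0 i (Finset.mem_univ i)
  have hc0 : 0 ≤ c := hz0 i0
  -- key sum identity: for a ∉ X, sum over subtype equals sum over Fin n
  have hsum : ∀ i : Fin n, ∑ b : {i : Fin n // i ∉ X}, P i b.1 * |x b| = ∑ j, P i j * z j := by
    intro i
    have h1 : ∑ j ∈ Xᶜ, P i j * z j = ∑ b : {i : Fin n // i ∉ X}, P i b.1 * z b.1 :=
      Finset.sum_subtype Xᶜ (fun j => Finset.mem_compl) (fun j => P i j * z j)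
    have h2 : ∑ j ∈ Xᶜ, P i j * z j = ∑ j, P i j * z j := by
      apply Finset.sum_subset (Finset.subset_univ _)
      intro j _ hj
      have hjX : j ∈ X := by simpa using hj
      have : z j = 0 := by simp [hz, hjX]
      simp [this]
    rw [← h2, h1]
    apply Finset.sum_congr rfl
    intro b _
    have : z b.1 = |x b| := by simp [hz, b.2]
    rw [this]
  -- equality propagation step
  have step : 0 < c → ∀ i, z i = c → ∀ j, 0 < P i j → z j = c := by
    intro hcpos i hzi j hPij
    have hiX : i ∉ X := by
      intro hmem
      have hzz : z i = 0 := by simp [hz, hmem]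
      rw [hzz] at hzi
      linarith
    have h1 : c ≤ ∑ k, P i k * z k := by
      have : |x ⟨i, hiX⟩| ≤ ∑ b : {i : Fin n // i ∉ X}, P i b.1 * |x b| := by
        rw [hx ⟨i, hiX⟩]
        refine le_trans (Finset.abs_sum_le_sum_abs _ _) ?_
        apply Finset.sum_le_sum
        intro b _
        rw [abs_mul, abs_of_nonneg (hP0 i b.1)]
      have hzi' : z i = |x ⟨i, hiX⟩| := by simp [hz, hiX]
      rw [← hsum i]
      rw [← hzi, hzi']
      exact this
    have h2 : ∑ k, P i k * z k ≤ ∑ k, P i k * c :=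
      Finset.sum_le_sum fun k _ => mul_le_mul_of_nonneg_left (hmax k) (hP0 i k)
    have h3 : ∑ k, P i k * c = c := by
      rw [← Finset.sum_mul, hProw i, one_mul]
    have heq : ∑ k, P i k * (c - z k) = 0 := by
      have : ∑ k, P i k * z k = c := le_antisymm (h3 ▸ h2) h1
      have expand : ∑ k, P i k * (c - z k) = ∑ k, P i k * c - ∑ k, P i k * z k := by
        rw [← Finset.sum_sub_distrib]
        apply Finset.sum_congr rfl; intros; ring
      rw [expand, h3, this, sub_self]
    have hterm := (Finset.sum_eq_zero_iff_of_nonneg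
      (fun k _ => mul_nonneg (hP0 i k) (sub_nonneg.mpr (hmax k)))).mp heq j (Finset.mem_univ j)
    have : c - z j = 0 := by
      rcases mul_eq_zero.mp hterm with h | h
      · exact absurd h (ne_of_gt hPij)
      · exact h
    linarith
  -- propagate through powers
  have pow_step : 0 < c → ∀ m : ℕ, ∀ i j, z i = c → 0 < (P ^ m) i j → z j = c := by
    intro hcpos m
    induction m with
    | zero =>
      intro i j hzi hpos
      rw [pow_zero] at hpos
      by_cases h : i = j
      · exact h ▸ hzi
      · rw [Matrix.one_apply_ne h] at hpos; exact absurd hpos (lt_irrefl 0)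
    | succ m ih =>
      intro i j hzi hpos
      rw [pow_succ', Matrix.mul_apply] at hpos
      have hpos' : ∑ k : Fin n, (0 : ℝ) < ∑ k, P i k * (P ^ m) k j := by
        simpa using hpos
      obtain ⟨k, -, hk'⟩ := Finset.exists_lt_of_sum_lt hpos'
      have h1 : 0 < P i k := by
        rcases lt_or_eq_of_le (hP0 i k) with h | h
        · exact h
        · rw [← h, zero_mul] at hk'; exact absurd hk' (lt_irrefl 0)
      have h2 : 0 < (P ^ m) k j := by
        rcases lt_or_eq_of_le (pow_entry_nonneg P hP0 m k j) with h | h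
        · exact h
        · rw [← h, mul_zero] at hk'; exact absurd hk' (lt_irrefl 0)
      exact ih k j (step hcpos i hzi k h1) h2
  -- conclude c = 0
  have hceq : c = 0 := by
    by_contra h
    have hcpos : 0 < c := lt_of_le_of_ne hc0 (Ne.symm h)
    obtain ⟨m, -, hm⟩ := hPirr i0 u
    have := pow_step hcpos m i0 u rfl hm
    have hzu : z u = 0 := by simp [hz, hu]
    rw [hzu] at this
    exact hcpos.ne this
  funext a
  have : z a.1 = 0 := le_antisymm (hceq ▸ hmax a.1) (hz0 a.1)
  have : |x a| = 0 := by simpa [hz, a.2] using this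
  simpa using abs_eq_zero.mp this

private lemma L_kernel {n : ℕ} (P : Matrix (Fin n) (Fin n) ℝ)
    (hP0 : ∀ i j, 0 ≤ P i j) (hProw : ∀ i, ∑ j, P i j = 1)
    (hPirr : ∀ i j, ∃ m : ℕ, 1 ≤ m ∧ 0 < (P ^ m) i j)
    (pv : Fin n → ℝ) (hpv0 : ∀ i, 0 < pv i)
    (d : ℝ) (hd : 0 < d)
    (L : Matrix (Fin n) (Fin n) ℝ)
    (hL : L = d • (Matrix.diagonal pv * (1 - P)))
    (X : Finset (Fin n)) (hX : X.Nonempty)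
    (y : {i : Fin n // i ∉ X} → ℝ)
    (hy : (L.submatrix (Subtype.val : {i : Fin n // i ∉ X} → Fin n) Subtype.val) *ᵥ y = 0) :
    y = 0 := by
  classical
  apply grounded_kernel P hP0 hProw hPirr X hX y
  intro a
  have h0 := congrFun hy a
  simp only [Matrix.mulVec, dotProduct, Matrix.submatrix_apply, Pi.zero_apply] at h0
  have hLentry : ∀ i j, L i j = d * (pv i * ((1 : Matrix (Fin n) (Fin n) ℝ) i j - P i j)) := by
    intro i j
    rw [hL]
    simp [Matrix.diagonal_mul, Matrix.sub_apply]
  have h1 : ∑ b : {i : Fin n // i ∉ X},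
      (pv a.1) * (((1 : Matrix (Fin n) (Fin n) ℝ) a.1 b.1 - P a.1 b.1) * y b) = 0 := by
    have : d * ∑ b : {i : Fin n // i ∉ X},
        (pv a.1) * (((1 : Matrix (Fin n) (Fin n) ℝ) a.1 b.1 - P a.1 b.1) * y b) = 0 := by
      rw [Finset.mul_sum]
      rw [← h0]
      apply Finset.sum_congr rfl
      intro b _
      rw [hLentry a.1 b.1]; ring
    exact (mul_eq_zero.mp this).resolve_left (ne_of_gt hd)
  have h2 : ∑ b : {i : Fin n // i ∉ X},
      (((1 : Matrix (Fin n) (Fin n) ℝ) a.1 b.1 - P a.1 b.1) * y b) = 0 := by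
    have := h1
    rw [← Finset.mul_sum] at this
    exact (mul_eq_zero.mp this).resolve_left (ne_of_gt (hpv0 a.1))
  have h3 : ∑ b : {i : Fin n // i ∉ X}, (1 : Matrix (Fin n) (Fin n) ℝ) a.1 b.1 * y b = y a := by
    rw [Finset.sum_eq_single a]
    · rw [Matrix.one_apply_eq, one_mul]
    · intro b _ hb
      have : a.1 ≠ b.1 := fun h => hb (Subtype.ext h.symm)
      rw [Matrix.one_apply_ne this, zero_mul]
    · intro h; exact absurd (Finset.mem_univ a) h
  have h4 : ∑ b : {i : Fin n // i ∉ X},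
      (((1 : Matrix (Fin n) (Fin n) ℝ) a.1 b.1 - P a.1 b.1) * y b)
      = y a - ∑ b : {i : Fin n // i ∉ X}, P a.1 b.1 * y b := by
    rw [← h3, ← Finset.sum_sub_distrib]
    apply Finset.sum_congr rfl; intros; ring
  rw [h4] at h2
  linarith [h2]

private lemma L_det_unit {n : ℕ} (P : Matrix (Fin n) (Fin n) ℝ)
    (hP0 : ∀ i j, 0 ≤ P i j) (hProw : ∀ i, ∑ j, P i j = 1)
    (hPirr : ∀ i j, ∃ m : ℕ, 1 ≤ m ∧ 0 < (P ^ m) i j)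
    (pv : Fin n → ℝ) (hpv0 : ∀ i, 0 < pv i)
    (d : ℝ) (hd : 0 < d)
    (L : Matrix (Fin n) (Fin n) ℝ)
    (hL : L = d • (Matrix.diagonal pv * (1 - P)))
    (X : Finset (Fin n)) (hX : X.Nonempty) :
    IsUnit ((L.submatrix Subtype.val Subtype.val :
      Matrix {i : Fin n // i ∉ X} {i : Fin n // i ∉ X} ℝ)).det := by
  rw [isUnit_iff_ne_zero]
  intro h
  obtain ⟨w, hw0, hw⟩ := Matrix.exists_mulVec_eq_zero_iff.mpr h
  exact hw0 (L_kernel P hP0 hProw hPirr pv hpv0 d hd L hL X hX w hw)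

/-- Marginal gain formula: for nonempty `Z`, `v ∉ Z` with `Z ∪ {v}`
proper, `e_vᵀ (L_{\Z})⁻¹ e_v ≠ 0` and
`tr((L_{\Z})⁻¹) − tr((L_{\(Z∪{v})})⁻¹) = (e_vᵀ ((L_{\Z})⁻¹)² e_v) / (e_vᵀ (L_{\Z})⁻¹ e_v)`. -/
theorem directed_group_resistance_marginal_gain
    {n : ℕ} (hn : 2 ≤ n)
    (P : Matrix (Fin n) (Fin n) ℝ)
    (hP0 : ∀ i j, 0 ≤ P i j)
    (hProw : ∀ i, ∑ j, P i j = 1)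
    (hPirr : ∀ i j, ∃ m : ℕ, 1 ≤ m ∧ 0 < (P ^ m) i j)
    (pv : Fin n → ℝ) (hpv0 : ∀ i, 0 < pv i) (hpvsum : ∑ i, pv i = 1)
    (hstat : pv ᵥ* P = pv)
    (d : ℝ) (hd : 0 < d)
    (L : Matrix (Fin n) (Fin n) ℝ)
    (hL : L = d • (Matrix.diagonal pv * (1 - P)))
    (Z : Finset (Fin n)) (hZnonempty : Z.Nonempty)
    (v : Fin n) (hv : v ∉ Z) (hZv : insert v Z ≠ Finset.univ)
    (LZ : Matrix {i : Fin n // i ∉ Z} {i : Fin n // i ∉ Z} ℝ)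
    (hLZ : LZ = L.submatrix Subtype.val Subtype.val)
    (LZv : Matrix {i : Fin n // i ∉ insert v Z} {i : Fin n // i ∉ insert v Z} ℝ)
    (hLZv : LZv = L.submatrix Subtype.val Subtype.val)
    (ev : {i : Fin n // i ∉ Z} → ℝ)
    (hev : ev = Pi.single ⟨v, hv⟩ (1 : ℝ)) :
    ev ⬝ᵥ (LZ⁻¹ *ᵥ ev) ≠ 0 ∧
    (LZ⁻¹).trace - (LZv⁻¹).trace =
      (ev ⬝ᵥ ((LZ⁻¹ * LZ⁻¹) *ᵥ ev)) / (ev ⬝ᵥ (LZ⁻¹ *ᵥ ev)) := by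
  classical
  set v' : {i : Fin n // i ∉ Z} := ⟨v, hv⟩ with hv'def
  set g : {i : Fin n // i ∉ insert v Z} → {i : Fin n // i ∉ Z} :=
    fun k => ⟨k.1, fun h => k.2 (Finset.mem_insert_of_mem h)⟩ with hgdef
  have hgne : ∀ k, g k ≠ v' := by
    intro k hk
    have hkv : k.1 = v := congrArg Subtype.val hk
    apply k.2
    rw [hkv]
    exact Finset.mem_insert_self v Z
  have hginj : Function.Injective g := by
    intro k1 k2 h
    exact Subtype.ext (show k1.1 = k2.1 from congrArg (Subtype.val : {i : Fin n // i ∉ Z} → Fin n) h)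
  -- sum splitting
  have hsum : ∀ f : {i : Fin n // i ∉ Z} → ℝ,
      ∑ a : {i : Fin n // i ∉ Z}, f a = f v' + ∑ k : {i : Fin n // i ∉ insert v Z}, f (g k) := by
    intro f
    rw [← Finset.add_sum_erase _ f (Finset.mem_univ v')]
    congr 1
    have h1 : ∑ a ∈ Finset.univ.erase v', f a
        = ∑ a : {a : {i : Fin n // i ∉ Z} // a ≠ v'}, f a.1 :=
      Finset.sum_subtype (Finset.univ.erase v') (fun a => by simp [Finset.mem_erase]) f
    rw [h1]
    let e : {i : Fin n // i ∉ insert v Z} ≃ {a : {i : Fin n // i ∉ Z} // a ≠ v'} :=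
      { toFun := fun k => ⟨g k, hgne k⟩
        invFun := fun a => ⟨a.1.1, fun h => (Finset.mem_insert.mp h).elim
          (fun h1 => a.2 (Subtype.ext h1)) (fun h2 => a.1.2 h2)⟩
        left_inv := fun k => rfl
        right_inv := fun a => rfl }
    exact (Fintype.sum_equiv e (fun k => f (g k)) (fun a => f a.1) (fun k => rfl)).symm
  have hsum' : ∀ f : {i : Fin n // i ∉ Z} → ℝ,
      ∑ k : {i : Fin n // i ∉ insert v Z}, f (g k)
        = (∑ a : {i : Fin n // i ∉ Z}, f a) - f v' := by
    intro f; rw [hsum f]; ring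
  -- invertibility of LZ
  have hdetZ : IsUnit LZ.det := by
    rw [hLZ]; exact L_det_unit P hP0 hProw hPirr pv hpv0 d hd L hL Z hZnonempty
  have hM1 : LZ * LZ⁻¹ = 1 := Matrix.mul_nonsing_inv _ hdetZ
  set M := LZ⁻¹ with hMdef
  have hLM : ∀ a b : {i : Fin n // i ∉ Z}, ∑ c : {i : Fin n // i ∉ Z}, LZ a c * M c b
      = (1 : Matrix {i : Fin n // i ∉ Z} {i : Fin n // i ∉ Z} ℝ) a b := by
    intro a b; rw [← Matrix.mul_apply, hM1]
  have hLZg : ∀ (i k : {i : Fin n // i ∉ insert v Z}), LZv i k = LZ (g i) (g k) := by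
    intro i k; rw [hLZv, hLZ]; rfl
  -- the diagonal entry is nonzero
  have hmvv : M v' v' ≠ 0 := by
    intro h0
    have hcolzero : (fun k : {i : Fin n // i ∉ insert v Z} => M (g k) v') = 0 := by
      apply L_kernel P hP0 hProw hPirr pv hpv0 d hd L hL (insert v Z)
        (Finset.insert_nonempty v Z)
      funext i
      simp only [Matrix.mulVec, dotProduct, Matrix.submatrix_apply, Pi.zero_apply]
      have : ∀ k : {i : Fin n // i ∉ insert v Z}, L i.1 k.1 * M (g k) v'
          = LZ (g i) (g k) * M (g k) v' := by
        intro k; rw [hLZ]; rfl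
      rw [Finset.sum_congr rfl (fun k _ => this k)]
      rw [hsum' (fun a => LZ (g i) a * M a v'), hLM (g i) v',
        Matrix.one_apply_ne (hgne i), h0]
      ring
    have hcol : ∀ a : {i : Fin n // i ∉ Z}, M a v' = 0 := by
      intro a
      by_cases ha : a = v'
      · rw [ha]; exact h0
      · have haz : a.1 ∉ insert v Z := by
          intro hmem
          rcases Finset.mem_insert.mp hmem with h1 | h2
          · exact ha (Subtype.ext h1)
          · exact a.2 h2
        have h2 := congrFun hcolzero ⟨a.1, haz⟩
        rw [show g ⟨a.1, haz⟩ = a from Subtype.ext rfl] at h2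
        exact h2
    have h1 : (1 : Matrix {i : Fin n // i ∉ Z} {i : Fin n // i ∉ Z} ℝ) v' v' = 0 := by
      rw [← hM1, Matrix.mul_apply]
      exact Finset.sum_eq_zero fun a _ => by rw [hcol a, mul_zero]
    rw [Matrix.one_apply_eq] at h1
    exact one_ne_zero h1
  -- dot product evaluations
  have hev1 : ev ⬝ᵥ (M *ᵥ ev) = M v' v' := by
    rw [hev, Matrix.mulVec_single, single_dotProduct]
    simp
  have hev2 : ev ⬝ᵥ ((M * M) *ᵥ ev) = (M * M) v' v' := by
    rw [hev, Matrix.mulVec_single, single_dotProduct]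
    simp
  refine ⟨by rw [hev1]; exact hmvv, ?_⟩
  -- the inverse of LZv
  set C : Matrix {i : Fin n // i ∉ insert v Z} {i : Fin n // i ∉ insert v Z} ℝ :=
    Matrix.of (fun i j => M (g i) (g j) - M (g i) v' * M v' (g j) / M v' v') with hCdef
  have hC : LZv * C = 1 := by
    ext i j
    rw [Matrix.mul_apply]
    have e1 : ∑ k, LZ (g i) (g k) * M (g k) (g j)
        = (1 : Matrix {i : Fin n // i ∉ Z} {i : Fin n // i ∉ Z} ℝ) (g i) (g j)
          - LZ (g i) v' * M v' (g j) := by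
      rw [hsum' (fun a => LZ (g i) a * M a (g j)), hLM (g i) (g j)]
    have e2 : ∑ k, LZ (g i) (g k) * M (g k) v' = -(LZ (g i) v' * M v' v') := by
      rw [hsum' (fun a => LZ (g i) a * M a v'), hLM (g i) v',
        Matrix.one_apply_ne (hgne i)]
      ring
    calc ∑ k, LZv i k * C k j
        = ∑ k, (LZ (g i) (g k) * M (g k) (g j)
            - LZ (g i) (g k) * M (g k) v' * (M v' (g j) / M v' v')) := by
          refine Finset.sum_congr rfl fun k _ => ?_
          rw [hLZg i k, hCdef]
          simp only [Matrix.of_apply]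
          ring
      _ = (∑ k, LZ (g i) (g k) * M (g k) (g j))
            - (∑ k, LZ (g i) (g k) * M (g k) v') * (M v' (g j) / M v' v') := by
          rw [Finset.sum_sub_distrib, ← Finset.sum_mul]
      _ = (1 : Matrix {i : Fin n // i ∉ Z} {i : Fin n // i ∉ Z} ℝ) (g i) (g j) := by
          rw [e1, e2]
          have h5 : -(LZ (g i) v' * M v' v') * (M v' (g j) / M v' v')
              = -(LZ (g i) v' * M v' (g j)) := by
            field_simp
          rw [h5]; ring
      _ = (1 : Matrix {i : Fin n // i ∉ insert v Z} {i : Fin n // i ∉ insert v Z} ℝ) i j := by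
          by_cases hij : i = j
          · rw [hij, Matrix.one_apply_eq, Matrix.one_apply_eq]
          · rw [Matrix.one_apply_ne hij, Matrix.one_apply_ne (fun h => hij (hginj h))]
  have hCinv : LZv⁻¹ = C := Matrix.inv_eq_right_inv hC
  -- trace computation
  have htr1 : M.trace = M v' v' + ∑ k, M (g k) (g k) := by
    rw [Matrix.trace]
    exact hsum (fun a => M a a)
  have htr2 : C.trace = ∑ k, (M (g k) (g k) - M (g k) v' * M v' (g k) / M v' v') := by
    rw [Matrix.trace]
    rfl
  have hMM : (M * M) v' v' = M v' v' * M v' v' + ∑ k, M v' (g k) * M (g k) v' := by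
    rw [Matrix.mul_apply]
    exact hsum (fun a => M v' a * M a v')
  rw [hev1, hev2, hCinv, htr1, htr2, hMM, Finset.sum_sub_distrib]
  have h6 : ∑ k, M (g k) v' * M v' (g k) / M v' v'
      = (∑ k, M (g k) v' * M v' (g k)) / M v' v' := by
    rw [← Finset.sum_div]
  have h7 : ∑ k, M v' (g k) * M (g k) v' = ∑ k, M (g k) v' * M v' (g k) :=
    Finset.sum_congr rfl fun k _ => mul_comm _ _
  rw [h6, h7]
  field_simp
  ring
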